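/- (Machine bound for MediumFit on agreeable instances.) Let α ∈ (0,1) and let J be a finite set of jobs that is agreeable (any two jobs in J are agreeable), in which every job is α-tight, and which is feasible on m machines. Then for every real number t, the number of jobs j ∈ J with t ∈ I_{1/2}(j) is at most 16m/α + 1. Consequently, the non-preemptive schedule that runs each job j exactly during its (1/2)-interval I_{1/2}(j) (which has length exactly p_j) uses at most 16m/α + 1 machines. -/

import Mathlib

/-- A job given by integer release date `r`, deadline `d`, and processing time `p`. -/
structure Job where
  r : ℤ
  d : ℤ
  p : ℤ
deriving DecidableEq

/-- A job is valid if `1 ≤ p` and `r + p ≤ d`. -/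
def Job.valid (j : Job) : Prop := 1 ≤ j.p ∧ j.r + j.p ≤ j.d

/-- The interval `I(j) = {t ∈ ℤ : r ≤ t < d}` of a job. -/
noncomputable def Job.interval (j : Job) : Finset ℤ := Finset.Ico j.r j.d

/-- The laxity `ℓ_j = d - r - p` of a job. -/
def Job.lax (j : Job) : ℤ := j.d - j.r - j.p

/-- The contribution `C(j, I) = max {0, |I ∩ I(j)| - ℓ_j}` of a job to a finite set `I ⊆ ℤ`. -/
noncomputable def contribution (j : Job) (I : Finset ℤ) : ℤ :=
  max 0 (((I ∩ j.interval).card : ℤ) - j.lax)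

/-- A finite set of jobs `J` is feasible on `m` machines. -/
def Feasible (J : Finset Job) (m : ℕ) : Prop :=
  ∃ σ : ℤ → Finset Job,
    (∀ t, σ t ⊆ J) ∧
    (∀ t, (σ t).card ≤ m) ∧
    (∀ t, ∀ j ∈ σ t, j.r ≤ t ∧ t < j.d) ∧
    (∀ j ∈ J, ((Finset.Ico j.r j.d).filter (fun t => j ∈ σ t)).card = j.p.toNat)

/-- A job is `α`-tight if `p_j > α (d_j - r_j)`. -/
def AlphaTight (α : ℝ) (j : Job) : Prop := α * ((j.d : ℝ) - (j.r : ℝ)) < (j.p : ℝ)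

/-- The `β`-interval `I_β(j) = [r_j + βℓ_j, d_j - βℓ_j)` of a job (a real interval). -/
def betaInterval (β : ℝ) (j : Job) : Set ℝ :=
  Set.Ico ((j.r : ℝ) + β * (j.lax : ℝ)) ((j.d : ℝ) - β * (j.lax : ℝ))

/-- Two jobs are agreeable if `(r_j - r_{j'})·(d_j - d_{j'}) ≥ 0`. -/
def Agreeable (j j' : Job) : Prop :=
  0 ≤ ((j.r : ℝ) - (j'.r : ℝ)) * ((j.d : ℝ) - (j'.d : ℝ))

/-- Two jobs are `β`-agreeable if they are agreeable and their `β`-intervals intersect. -/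
def BetaAgreeable (β : ℝ) (j j' : Job) : Prop :=
  Agreeable j j' ∧ (betaInterval β j ∩ betaInterval β j').Nonempty

/-! Let `j₀` be a job of minimal length `L` among those whose `1/2`-interval contains `t`, and let
`I` be the integer window of radius `4L` around `⌊t⌋`. Agreeability with `j₀` bounds the laxity of
every such job by `2L`, so each of them either lies inside `I` or meets at least `4L + 1` of its
slots; either way it must be processed for at least `αL` units of time within `I`. On `m` machines
at most `m|I| ≤ 9mL` units of work fit into `I`, hence there are at most `9m/α` such jobs. -/

open Finset

namespace Job

lemma valid.lax_nonneg {j : Job} (hj : j.valid) : 0 ≤ j.lax := by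
  rw [Job.lax]
  linarith [hj.2]

lemma contribution_le_card_filter {j : Job} (hj : j.valid) (P : ℤ → Prop) [DecidablePred P]
    (hP : #((Ico j.r j.d).filter P) = j.p.toNat) (I : Finset ℤ) :
    contribution j I ≤ #(I.filter P) := by
  set T := (Ico j.r j.d).filter P
  have hT : #T ≤ #(I.filter P) + #(j.interval \ I) :=
    calc #T = #(T ∩ I) + #(T \ I) := (card_inter_add_card_sdiff T I).symm
      _ ≤ _ := by
        gcongr
        · exact fun s hs => by simp_all [T]
        · exact filter_subset _ _
  obtain ⟨hp, hrd⟩ := hj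
  have hcard : (#j.interval : ℤ) = j.d - j.r := by
    rw [Job.interval, Int.card_Ico]
    omega
  have hsplit := card_inter_add_card_sdiff j.interval I
  rw [contribution, Job.lax, inter_comm]
  omega

lemma min_le_contribution_Ico (j : Job) {s k : ℤ} (hs : s ∈ j.interval) (hk : 0 ≤ k) :
    min j.p (k + 1 - j.lax) ≤ contribution j (Ico (s - k) (s + k + 1)) := by
  rw [Job.interval, mem_Ico] at hs
  refine le_max_of_le_right ?_
  rw [Job.interval, Ico_inter_Ico, Int.card_Ico, Job.lax]
  have := Int.self_le_toNat (min (s + k + 1) j.d - max (s - k) j.r)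
  omega

lemma floor_mem_interval {j : Job} (hj : 0 ≤ j.lax) {β t : ℝ} (hβ : 0 ≤ β)
    (ht : t ∈ betaInterval β j) : ⌊t⌋ ∈ j.interval := by
  have hβlax : 0 ≤ β * j.lax := mul_nonneg hβ (by exact_mod_cast hj)
  obtain ⟨hrt, htd⟩ := ht
  rw [Job.interval, mem_Ico, Int.le_floor, Int.floor_lt]
  constructor <;> linarith

end Job

lemma Agreeable.mul_lax_lt {j j₀ : Job} (hag : Agreeable j j₀) (h₀ : 0 ≤ j₀.lax) {β t : ℝ}
    (hβ : 0 ≤ β) (ht : t ∈ betaInterval β j) (ht₀ : t ∈ betaInterval β j₀) :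
    β * j.lax < j₀.d - j₀.r := by
  have hβlax₀ : 0 ≤ β * j₀.lax := mul_nonneg hβ (by exact_mod_cast h₀)
  obtain ⟨hrt, htd⟩ := ht
  obtain ⟨hrt₀, htd₀⟩ := ht₀
  rcases mul_nonneg_iff.mp hag with ⟨hr, -⟩ | ⟨-, hd⟩ <;> linarith

lemma Feasible.sum_contribution_le {J : Finset Job} {m : ℕ} (hJ : ∀ j ∈ J, j.valid)
    (hfeas : Feasible J m) (I : Finset ℤ) :
    ∑ j ∈ J, contribution j I ≤ m * #I := by
  obtain ⟨σ, -, hm, -, hwork⟩ := hfeas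
  calc ∑ j ∈ J, contribution j I
      ≤ ∑ j ∈ J, (#(I.bipartiteAbove (fun j s => j ∈ σ s) j) : ℤ) :=
        sum_le_sum fun j hj => Job.contribution_le_card_filter (hJ j hj) _ (hwork j hj) I
    _ = ∑ s ∈ I, (#(J.bipartiteBelow (fun j s => j ∈ σ s) s) : ℤ) := by
        exact_mod_cast sum_card_bipartiteAbove_eq_sum_card_bipartiteBelow _
    _ ≤ ∑ _s ∈ I, (m : ℤ) := by
        gcongr with s
        exact_mod_cast (card_le_card fun j hj => (mem_filter.mp hj).2).trans (hm s)
    _ = m * #I := by rw [sum_const, nsmul_eq_mul, mul_comm]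

lemma Feasible.card_mul_le_of_le_contribution {J S : Finset Job} {m : ℕ} (hJ : ∀ j ∈ J, j.valid)
    (hfeas : Feasible J m) (hS : S ⊆ J) (I : Finset ℤ) {c : ℝ}
    (hc : ∀ j ∈ S, c ≤ contribution j I) : #S * c ≤ m * #I :=
  calc #S * c ≤ ∑ j ∈ S, (contribution j I : ℝ) := by
        simpa using card_nsmul_le_sum S _ c hc
    _ ≤ ∑ j ∈ J, (contribution j I : ℝ) :=
        sum_le_sum_of_subset_of_nonneg hS fun j _ _ => by exact_mod_cast le_max_left _ _
    _ ≤ m * #I := by exact_mod_cast hfeas.sum_contribution_le hJ I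

lemma AlphaTight.mul_le_contribution_Ico {α : ℝ} (hα₀ : 0 ≤ α) (hα₁ : α ≤ 1) {j : Job}
    (htight : AlphaTight α j) (hj : 0 ≤ j.lax) {L : ℤ} (hL : L ≤ j.d - j.r)
    (hlax : (1 / 2 : ℝ) * j.lax < L) {t : ℝ} (ht : t ∈ betaInterval (1 / 2) j) :
    α * L ≤ contribution j (Ico (⌊t⌋ - 4 * L) (⌊t⌋ + 4 * L + 1)) := by
  have hlax' : j.lax < 2 * L := by exact_mod_cast (by linarith : (j.lax : ℝ) < 2 * L)
  have hwin := j.min_le_contribution_Ico (k := 4 * L)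
    (Job.floor_mem_interval hj (by norm_num) ht) (by omega)
  have hL₀ : (0 : ℝ) ≤ L := by exact_mod_cast (show 0 ≤ L by omega)
  have hp : α * L ≤ j.p :=
    calc α * L ≤ α * (j.d - j.r) := by gcongr; exact_mod_cast hL
      _ ≤ j.p := htight.le
  have hwidth : α * L ≤ 4 * L + 1 - j.lax :=
    calc α * L ≤ L := mul_le_of_le_one_left hL₀ hα₁
      _ ≤ 4 * L + 1 - j.lax := by exact_mod_cast (show L ≤ 4 * L + 1 - j.lax by omega)
  calc α * L ≤ ((min j.p (4 * L + 1 - j.lax) : ℤ) : ℝ) := by push_cast; exact le_min hp hwidth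
    _ ≤ contribution j (Ico (⌊t⌋ - 4 * L) (⌊t⌋ + 4 * L + 1)) := by exact_mod_cast hwin

/-- machine bound for MediumFit: on an agreeable instance of α-tight jobs
feasible on `m` machines, at any real time `t` at most `16m/α + 1` jobs satisfy
`t ∈ I_{1/2}(j)`, so MediumFit uses at most `16m/α + 1` machines. -/
theorem mediumfit_machine_bound
    (α : ℝ) (hα : α ∈ Set.Ioo (0 : ℝ) 1)
    (J : Finset Job) (hJ : ∀ j ∈ J, j.valid)
    (hagree : ∀ j ∈ J, ∀ j' ∈ J, Agreeable j j')
    (htight : ∀ j ∈ J, AlphaTight α j)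
    (m : ℕ) (hfeas : Feasible J m) (t : ℝ) :
    ({j : Job | j ∈ J ∧ t ∈ betaInterval (1 / 2) j}.ncard : ℝ) ≤ 16 * (m : ℝ) / α + 1 := by
  classical
  obtain ⟨hα₀, hα₁⟩ := hα
  set S := J.filter fun j => t ∈ betaInterval (1 / 2) j
  have hS : {j : Job | j ∈ J ∧ t ∈ betaInterval (1 / 2) j}.ncard = #S := by
    rw [← Set.ncard_coe_finset, coe_filter]
  rw [hS]
  obtain hS₀ | ⟨j₀, hj₀, hmin⟩ :=
    S.eq_empty_or_nonempty.imp id (S.exists_min_image fun j => j.d - j.r)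
  · simp only [hS₀, card_empty, Nat.cast_zero]
    positivity
  obtain ⟨hj₀J, hj₀t⟩ := mem_filter.mp hj₀
  set L := j₀.d - j₀.r
  have hL : 0 < L := by
    obtain ⟨hp₀, hrd₀⟩ := hJ j₀ hj₀J
    omega
  have hc : ∀ j ∈ S, α * L ≤ contribution j (Ico (⌊t⌋ - 4 * L) (⌊t⌋ + 4 * L + 1)) := by
    intro j hj
    obtain ⟨hjJ, hjt⟩ := mem_filter.mp hj
    have hlax := (hagree j hjJ j₀ hj₀J).mul_lax_lt (hJ j₀ hj₀J).lax_nonneg (by norm_num) hjt hj₀t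
    exact (htight j hjJ).mul_le_contribution_Ico hα₀.le hα₁.le (hJ j hjJ).lax_nonneg (hmin j hj)
      (by push_cast [L]; exact hlax) hjt
  have hcount := hfeas.card_mul_le_of_le_contribution hJ (filter_subset _ _) _ hc
  have hwin : (#(Ico (⌊t⌋ - 4 * L) (⌊t⌋ + 4 * L + 1)) : ℝ) ≤ 9 * L := by
    rw [Int.card_Ico]
    exact_mod_cast (show ((⌊t⌋ + 4 * L + 1 - (⌊t⌋ - 4 * L)).toNat : ℤ) ≤ 9 * L by omega)
  have hαS : #S * α ≤ 9 * m := le_of_mul_le_mul_right (by nlinarith) (Int.cast_pos.mpr hL)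
  calc (#S : ℝ) ≤ 9 * m / α := (le_div_iff₀ hα₀).2 hαS
    _ ≤ 16 * m / α := by gcongr; norm_num
    _ ≤ 16 * m / α + 1 := le_add_of_nonneg_right zero_le_one
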